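/- arXiv:1803.01702 — 3 statements merged into one kernel-verified Lean document; each statement's English description precedes it below -/
import Mathlib

section
/- Let (Ω, P) be a probability space, ξ : T → ℝ a bounded stochastic process, U = {t₁,…,tₙ} a finite ρ-net of T in the sense that the sets B(tᵢ) cover T, and suppose the increments are stationary in the sense that for each i the random variable sup_{t∈B(tᵢ)}(ξ(t) − ξ(tᵢ)) has the same distribution as δ := sup_{t∈B(t₀)}(ξ(t) − ξ(t₀)) for a fixed reference point t₀. Then for any real numbers a > c: P(sup_{t∈U} ξ(t) ≤ c) ≤ P(sup_{t∈T} ξ(t) ≤ a) + n · P(δ ≥ a − c). -/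
open MeasureTheory Set

/-! If the supremum of `ξ` over `T` exceeds `a` while `ξ ≤ c` on the net, then a point
where `ξ > a` lies in some `B(tᵢ)`, so the increment over `B(tᵢ)` based at `tᵢ` exceeds `a - c`.
Hence `{max_U ξ ≤ c} ⊆ {sup_T ξ ≤ a} ∪ ⋃ᵢ {a - c ≤ δᵢ}`, and the union bound together with
`δᵢ ∼ δ` gives the claim. -/

lemma BddAbove.range_restrict_sub {T : Type*} {f : T → ℝ} (hf : BddAbove (range f))
    (S : Set T) (x : ℝ) : BddAbove (range fun s : S => f s - x) := by
  obtain ⟨M, hM⟩ := hf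
  exact ⟨M - x, by rintro _ ⟨s, rfl⟩; exact sub_le_sub_right (hM ⟨s, rfl⟩) x⟩

lemma exists_lt_ciSup_sub_of_lt_ciSup {T ι : Type*} [Nonempty T] {f : T → ℝ}
    (hf : BddAbove (range f)) {t : ι → T} {B : ι → Set T} (hcover : ⋃ i, B i = univ)
    {a c : ℝ} (hnet : ∀ i, f (t i) ≤ c) (ha : a < ⨆ s, f s) :
    ∃ i, a - c < ⨆ s : B i, (f s - f (t i)) := by
  obtain ⟨s, hs⟩ := (lt_ciSup_iff hf).mp ha
  obtain ⟨i, hi⟩ := mem_iUnion.mp (hcover ▸ mem_univ s)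
  refine ⟨i, ?_⟩
  calc a - c < f s - f (t i) := by linarith [hnet i]
    _ ≤ ⨆ s : B i, (f s - f (t i)) := le_ciSup (hf.range_restrict_sub _ _) ⟨s, hi⟩

lemma measure_le_add_card_mul {Ω ι : Type*} [Fintype ι] [MeasurableSpace Ω]
    {μ : Measure Ω} {A E D : Set Ω} {C : ι → Set Ω} (hsub : A ⊆ E ∪ ⋃ i, C i)
    (hC : ∀ i, μ (C i) = μ D) :
    μ A ≤ μ E + Fintype.card ι * μ D :=
  calc μ A ≤ μ (E ∪ ⋃ i, C i) := measure_mono hsub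
    _ ≤ μ E + ∑ i, μ (C i) :=
      (measure_union_le _ _).trans (by gcongr; exact measure_iUnion_fintype_le _ _)
    _ = μ E + Fintype.card ι * μ D := by simp [hC]

theorem stmt1_general {T : Type*} [Nonempty T] {ι : Type*} [Fintype ι]
    {Ω : Type*} [MeasurableSpace Ω] (P : Measure Ω)
    (ξ : T → Ω → ℝ)
    (hbdd : ∀ ω, BddAbove (Set.range fun s => ξ s ω))
    (t : ι → T) (B : ι → Set T)
    (hcover : (⋃ i, B i) = Set.univ)
    (δ : Ω → ℝ)
    (hdistr : ∀ i (x : ℝ),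
      P {ω | x ≤ ⨆ s : B i, (ξ (s : T) ω - ξ (t i) ω)} = P {ω | x ≤ δ ω})
    (a c : ℝ) :
    P {ω | (⨆ i, ξ (t i) ω) ≤ c}
      ≤ P {ω | (⨆ s : T, ξ s ω) ≤ a} + (Fintype.card ι) * P {ω | a - c ≤ δ ω} := by
  refine measure_le_add_card_mul (fun ω hω => ?_) fun i => hdistr i (a - c)
  rcases le_or_gt (⨆ s, ξ s ω) a with ha | ha
  · exact Or.inl ha
  have hnet : ∀ i, ξ (t i) ω ≤ c := fun i =>
    (le_ciSup (Set.finite_range fun j => ξ (t j) ω).bddAbove i).trans hω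
  obtain ⟨i, hi⟩ := exists_lt_ciSup_sub_of_lt_ciSup (hbdd ω) hcover hnet ha
  exact Or.inr (mem_iUnion.mpr ⟨i, hi.le⟩)

/-- Lemma 2 (probability part): for a bounded process with a finite net whose covering-set
oscillations are all equidistributed with a fixed variable δ,
P(max over net ≤ c) ≤ P(sup over all of T ≤ a) + n · P(δ ≥ a − c). -/
theorem stmt1 {T : Type*} [Nonempty T] {ι : Type*} [Fintype ι] [Nonempty ι]
    {Ω : Type*} [MeasurableSpace Ω] (P : Measure Ω) [IsProbabilityMeasure P]
    (ξ : T → Ω → ℝ) (hmeas : ∀ t, Measurable (ξ t))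
    (hbdd : ∀ ω, BddAbove (Set.range fun s => ξ s ω))
    (t : ι → T) (B : ι → Set T)
    (hmem : ∀ i, t i ∈ B i) (hcover : (⋃ i, B i) = Set.univ)
    (δ : Ω → ℝ) (hδmeas : Measurable δ)
    (hdistr : ∀ i (x : ℝ),
      P {ω | x ≤ ⨆ s : B i, (ξ (s : T) ω - ξ (t i) ω)} = P {ω | x ≤ δ ω})
    (a c : ℝ) (hac : c < a) :
    P {ω | (⨆ i, ξ (t i) ω) ≤ c}
      ≤ P {ω | (⨆ s : T, ξ s ω) ≤ a} + (Fintype.card ι) * P {ω | a - c ≤ δ ω} :=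
  stmt1_general P ξ hbdd t B hcover δ hdistr a c
end

section
/- Under the same hypotheses, for any b > 0: E[sup_{t∈U} ξ(t)] ≤ E[sup_{t∈T} ξ(t)] ≤ E[sup_{t∈U} ξ(t)] + b + n · E[(δ − b)₊], where x₊ = max(x,0). -/
/-!
Cover `T` by the cells `B i` and write `Dᵢ = sup_{s ∈ B i} (ξ s - ξ (t i))`. Pointwise,
`sup_T ξ ≤ maxᵢ (ξ (t i) + Dᵢ) ≤ sup_U ξ + maxᵢ Dᵢ`, so the excess `sup_T ξ - sup_U ξ` exceeds a
level `y` only where some `Dᵢ` does, and a union bound gives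
`P (y ≤ sup_T ξ - sup_U ξ) ≤ n · P (y ≤ δ)`. Integrating these tail bounds over `y > b`
(layer cake) yields `E (sup_T ξ - sup_U ξ - b)₊ ≤ n · E (δ - b)₊`. The `Dᵢ` need not be
measurable: only outer measures of their level sets enter.
-/

open MeasureTheory Set
open scoped ENNReal NNReal

theorem setOf_le_max_sub_zero {α : Type*} {f : α → ℝ} {x : ℝ} (hx : 0 < x) (b : ℝ) :
    {a | x ≤ max (f a - b) 0} = {a | b + x ≤ f a} := by
  ext a
  simp only [mem_ofPred_eq, le_max_iff, not_le.mpr hx, or_false]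
  constructor <;> intro h <;> linarith

section LayerCake

variable {α : Type*} [MeasurableSpace α] {μ ν : Measure α}

theorem lintegral_ofReal_le_mul_of_meas_le {f g : α → ℝ} (hf_nn : 0 ≤ᵐ[μ] f)
    (hf : AEMeasurable f μ) (hg_nn : 0 ≤ᵐ[ν] g) (hg : AEMeasurable g ν) (c : ℝ≥0∞)
    (h : ∀ x, 0 < x → μ {a | x ≤ f a} ≤ c * ν {a | x ≤ g a}) :
    ∫⁻ a, ENNReal.ofReal (f a) ∂μ ≤ c * ∫⁻ a, ENNReal.ofReal (g a) ∂ν := by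
  have hanti : Antitone fun x : ℝ => ν {a | x ≤ g a} :=
    fun x y hxy => measure_mono fun a ha => hxy.trans ha
  rw [lintegral_eq_lintegral_meas_le μ hf_nn hf, lintegral_eq_lintegral_meas_le ν hg_nn hg,
    ← lintegral_const_mul c hanti.measurable]
  exact setLIntegral_mono (hanti.measurable.const_mul c) fun x hx => h x hx

theorem integral_le_mul_of_meas_le {f g : α → ℝ} (hf_nn : 0 ≤ᵐ[μ] f)
    (hf : AEMeasurable f μ) (hg_nn : 0 ≤ᵐ[ν] g) (hg : Integrable g ν) (c : ℝ≥0)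
    (h : ∀ x, 0 < x → μ {a | x ≤ f a} ≤ c * ν {a | x ≤ g a}) :
    ∫ a, f a ∂μ ≤ c * ∫ a, g a ∂ν := by
  have hle := lintegral_ofReal_le_mul_of_meas_le hf_nn hf hg_nn hg.aemeasurable c h
  rw [integral_eq_lintegral_of_nonneg_ae hf_nn hf.aestronglyMeasurable,
    integral_eq_lintegral_of_nonneg_ae hg_nn hg.aestronglyMeasurable]
  simpa [ENNReal.toReal_mul] using
    ENNReal.toReal_mono (ENNReal.mul_ne_top ENNReal.coe_ne_top hg.lintegral_lt_top.ne) hle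

theorem integral_max_sub_le_mul_of_meas_le [IsFiniteMeasure ν] {X Y : α → ℝ}
    (hX : AEMeasurable X μ) (hY : Integrable Y ν) (c : ℝ≥0) (b : ℝ)
    (h : ∀ y, μ {a | y ≤ X a} ≤ c * ν {a | y ≤ Y a}) :
    ∫ a, max (X a - b) 0 ∂μ ≤ c * ∫ a, max (Y a - b) 0 ∂ν := by
  refine integral_le_mul_of_meas_le (f := fun a => max (X a - b) 0)
    (g := fun a => max (Y a - b) 0) (ae_of_all _ fun _ => le_max_right _ _)
    ((hX.sub_const b).max aemeasurable_const) (ae_of_all _ fun _ => le_max_right _ _)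
    ((hY.sub (integrable_const b)).sup (integrable_const 0)) c fun x hx => ?_
  rw [setOf_le_max_sub_zero hx, setOf_le_max_sub_zero hx]
  exact h (b + x)

end LayerCake

theorem exists_ciSup_sub_ciSup_le_of_iUnion_eq_univ {T ι : Type*} [Finite ι] [Nonempty ι]
    {f : T → ℝ} (hf : BddAbove (range f)) (t : ι → T) {B : ι → Set T}
    (hcover : ⋃ i, B i = univ) :
    ∃ i, (⨆ s, f s) - ⨆ j, f (t j) ≤ ⨆ s : B i, (f s - f (t i)) := by
  have hB : ∀ i, BddAbove (range fun s : B i => f s - f (t i)) := by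
    obtain ⟨M, hM⟩ := hf
    exact fun i => ⟨M - f (t i), by
      rintro _ ⟨s, rfl⟩
      exact sub_le_sub_right (hM ⟨s, rfl⟩) _⟩
  obtain ⟨i, hi⟩ :=
    exists_eq_ciSup_of_finite (f := fun i => f (t i) + ⨆ s : B i, (f s - f (t i)))
  have : Nonempty T := ⟨t i⟩
  have hsup : (⨆ s, f s) ≤ f (t i) + ⨆ s : B i, (f s - f (t i)) := by
    refine ciSup_le fun s => ?_
    obtain ⟨j, hj⟩ := mem_iUnion.mp (hcover ▸ mem_univ s)
    calc f s ≤ f (t j) + ⨆ s : B j, (f s - f (t j)) := by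
          linarith [le_ciSup (hB j) ⟨s, hj⟩]
      _ ≤ _ := by
          rw [hi]
          exact le_ciSup (f := fun j => f (t j) + ⨆ s : B j, (f s - f (t j)))
            (finite_range _).bddAbove j
  refine ⟨i, ?_⟩
  linarith [le_ciSup (f := fun j => f (t j)) (finite_range _).bddAbove i]

theorem stmt2_general {T : Type*} {ι : Type*} [Fintype ι] [Nonempty ι]
    {Ω : Type*} [MeasurableSpace Ω] (P : Measure Ω) [IsProbabilityMeasure P]
    (ξ : T → Ω → ℝ)
    (hbdd : ∀ ω, BddAbove (Set.range fun s => ξ s ω))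
    (t : ι → T) (B : ι → Set T)
    (hcover : (⋃ i, B i) = Set.univ)
    (δ : Ω → ℝ)
    (hδint : Integrable δ P)
    (hdistr : ∀ i (x : ℝ),
      P {ω | x ≤ ⨆ s : B i, (ξ (s : T) ω - ξ (t i) ω)} = P {ω | x ≤ δ ω})
    (hintU : Integrable (fun ω => ⨆ i, ξ (t i) ω) P)
    (hintT : Integrable (fun ω => ⨆ s : T, ξ s ω) P)
    (b : ℝ) :
    (∫ ω, (⨆ i, ξ (t i) ω) ∂P ≤ ∫ ω, (⨆ s : T, ξ s ω) ∂P) ∧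
    (∫ ω, (⨆ s : T, ξ s ω) ∂P
      ≤ ∫ ω, (⨆ i, ξ (t i) ω) ∂P + b + (Fintype.card ι) * ∫ ω, max (δ ω - b) 0 ∂P) := by
  have : Nonempty T := ⟨t (Classical.arbitrary ι)⟩
  refine ⟨integral_mono hintU hintT fun ω => ciSup_le fun i => le_ciSup (hbdd ω) (t i), ?_⟩
  set excess : Ω → ℝ := fun ω => (⨆ s : T, ξ s ω) - ⨆ i, ξ (t i) ω
  have htail : ∀ y, P {ω | y ≤ excess ω} ≤ (Fintype.card ι : ℝ≥0) * P {ω | y ≤ δ ω} := by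
    intro y
    calc P {ω | y ≤ excess ω}
        ≤ P (⋃ i, {ω | y ≤ ⨆ s : B i, (ξ (s : T) ω - ξ (t i) ω)}) := measure_mono fun ω hω =>
          have ⟨i, hi⟩ := exists_ciSup_sub_ciSup_le_of_iUnion_eq_univ (hbdd ω) t hcover
          mem_iUnion.mpr ⟨i, le_trans hω hi⟩
      _ ≤ ∑ i, P {ω | y ≤ ⨆ s : B i, (ξ (s : T) ω - ξ (t i) ω)} := measure_iUnion_fintype_le P _
      _ = (Fintype.card ι : ℝ≥0) * P {ω | y ≤ δ ω} := by simp [hdistr]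
  have hexcess_int : Integrable excess P := hintT.sub hintU
  have hmean : ∫ ω, excess ω ∂P = ∫ ω, (⨆ s : T, ξ s ω) ∂P - ∫ ω, (⨆ i, ξ (t i) ω) ∂P :=
    integral_sub hintT hintU
  have hexcess : ∫ ω, excess ω - b ∂P ≤ ∫ ω, max (excess ω - b) 0 ∂P :=
    integral_mono (hexcess_int.sub (integrable_const b))
      ((hexcess_int.sub (integrable_const b)).sup (integrable_const 0)) fun ω => le_max_left _ _
  have hmain := integral_max_sub_le_mul_of_meas_le hexcess_int.aemeasurable hδint
    (Fintype.card ι) b htail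
  rw [integral_sub hexcess_int (integrable_const b), hmean] at hexcess
  simp only [integral_const, probReal_univ, smul_eq_mul, one_mul, NNReal.coe_natCast]
    at hexcess hmain
  linarith

/-- Lemma 2 (expectation part): E[max over net] ≤ E[sup over T]
    ≤ E[max over net] + b + n · E[(δ − b)₊]. -/
theorem stmt2 {T : Type*} [Nonempty T] {ι : Type*} [Fintype ι] [Nonempty ι]
    {Ω : Type*} [MeasurableSpace Ω] (P : Measure Ω) [IsProbabilityMeasure P]
    (ξ : T → Ω → ℝ) (hmeas : ∀ t, Measurable (ξ t))
    (hbdd : ∀ ω, BddAbove (Set.range fun s => ξ s ω))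
    (t : ι → T) (B : ι → Set T)
    (hmem : ∀ i, t i ∈ B i) (hcover : (⋃ i, B i) = Set.univ)
    (δ : Ω → ℝ) (hδmeas : Measurable δ) (hδ0 : ∀ ω, 0 ≤ δ ω)
    (hδint : Integrable δ P)
    (hdistr : ∀ i (x : ℝ),
      P {ω | x ≤ ⨆ s : B i, (ξ (s : T) ω - ξ (t i) ω)} = P {ω | x ≤ δ ω})
    (hintU : Integrable (fun ω => ⨆ i, ξ (t i) ω) P)
    (hintT : Integrable (fun ω => ⨆ s : T, ξ s ω) P)
    (b : ℝ) (hb : 0 < b) :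
    (∫ ω, (⨆ i, ξ (t i) ω) ∂P ≤ ∫ ω, (⨆ s : T, ξ s ω) ∂P) ∧
    (∫ ω, (⨆ s : T, ξ s ω) ∂P
      ≤ ∫ ω, (⨆ i, ξ (t i) ω) ∂P + b + (Fintype.card ι) * ∫ ω, max (δ ω - b) 0 ∂P) :=
  stmt2_general P ξ hbdd t B hcover δ hδint hdistr hintU hintT b
end

section
/- Let g : [0,∞) → (0,∞) be bounded, continuous, and decreasing with ∫₀^∞ |log g(x)|/(1+x²) dx < ∞, and let f : ℝ^d → (0,∞) satisfy f(λ) ≥ g(|λ|) and ∫_{|λ|>δ} f(λ)dλ < ∞ for every δ > 0. Suppose U : ℝ → (0,∞) is an even entire function of exponential type with sup_x U(εx)/g(x) < ∞ for every ε > 0. Then for any fixed 0 < ε < 1, the function v(λ) = U(|λ|) − U(ε|λ|) satisfies ∫ v(λ)²/f(λ) dλ < ∞. -/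
/-! Since U > 0, |v(λ)| ≤ max (U |λ|, U (ε|λ|)) ≤ C g(|λ|), and as 0 < g(|λ|) ≤ f(λ) this gives
v²/f ≤ C² g(|λ|). Bounding g(|λ|) by g(0) on the unit ball and by f(λ) outside it makes v²/f
dominated by a constant on a set of finite measure and by the integrable C² f elsewhere. -/

open MeasureTheory

theorem continuous_of_differentiable_ofReal {U : ℝ → ℝ} {E : ℂ → ℂ} (hE : Differentiable ℂ E)
    (hEU : ∀ x : ℝ, E x = U x) : Continuous U := by
  have hU : U = fun x : ℝ => (E x).re := funext fun x => by rw [hEU x, Complex.ofReal_re]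
  rw [hU]
  exact Complex.continuous_re.comp (hE.continuous.comp Complex.continuous_ofReal)

theorem sq_div_le_of_abs_le {v c g f : ℝ} (hg : 0 < g) (hgf : g ≤ f) (hv : |v| ≤ c * g) :
    v ^ 2 / f ≤ c ^ 2 * g := by
  have hf : 0 < f := hg.trans_le hgf
  rw [div_le_iff₀ hf]
  calc v ^ 2 = |v| ^ 2 := (sq_abs v).symm
    _ ≤ (c * g) ^ 2 := pow_le_pow_left₀ (abs_nonneg v) hv 2
    _ = c ^ 2 * g * g := by ring
    _ ≤ c ^ 2 * g * f := by gcongr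

theorem integrable_of_le_const_of_le_integrableOn_norm_gt {E : Type*} [NormedAddCommGroup E]
    [ProperSpace E] [MeasurableSpace E] [BorelSpace E] {μ : Measure E}
    [IsFiniteMeasureOnCompacts μ] {F G : E → ℝ} {M : ℝ} (r : ℝ)
    (hF : AEStronglyMeasurable F μ) (hG : IntegrableOn G {x | r < ‖x‖} μ)
    (hFM : ∀ x, ‖F x‖ ≤ M) (hFG : ∀ x, ‖F x‖ ≤ G x) : Integrable F μ := by
  have hsplit : (Set.univ : Set E) = Metric.closedBall 0 r ∪ {x | r < ‖x‖} := by
    ext x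
    simp [le_or_gt]
  rw [← integrableOn_univ, hsplit]
  refine IntegrableOn.union ?_ ?_
  · exact Integrable.mono' (integrableOn_const measure_closedBall_lt_top.ne enorm_ne_top)
      hF.restrict (Filter.Eventually.of_forall hFM)
  · exact Integrable.mono' hG hF.restrict (Filter.Eventually.of_forall hFG)

theorem stmt13_general (d : ℕ) (g : ℝ → ℝ) (hgpos : ∀ x, 0 ≤ x → 0 < g x)
    (hgbdd : ∀ x, 0 ≤ x → g x ≤ g 0)
    (f : EuclideanSpace ℝ (Fin d) → ℝ) (hfmeas : Measurable f)
    (hfg : ∀ lam, g ‖lam‖ ≤ f lam)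
    (hfint : ∀ δ : ℝ, 0 < δ → MeasureTheory.IntegrableOn f {lam | δ < ‖lam‖})
    (U : ℝ → ℝ) (hUpos : ∀ x, 0 < U x)
    (hUentire : ∃ E : ℂ → ℂ, Differentiable ℂ E ∧ (∀ x : ℝ, E x = U x) ∧
      ∃ A B : ℝ, ∀ z, ‖E z‖ ≤ A * Real.exp (B * ‖z‖))
    (hUg : ∀ ε : ℝ, 0 < ε → ∃ C : ℝ, ∀ x, 0 ≤ x → U (ε * x) ≤ C * g x)
    (ε : ℝ) (hε : 0 < ε) :
    MeasureTheory.Integrable (fun lam : EuclideanSpace ℝ (Fin d) =>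
      (U ‖lam‖ - U (ε * ‖lam‖)) ^ 2 / f lam) := by
  obtain ⟨E, hE, hEU, -⟩ := hUentire
  have hU : Continuous U := continuous_of_differentiable_ofReal hE hEU
  obtain ⟨C₁, hC₁⟩ := hUg 1 one_pos
  obtain ⟨C₂, hC₂⟩ := hUg ε hε
  set C := max C₁ C₂
  have hv : ∀ x, 0 ≤ x → |U x - U (ε * x)| ≤ C * g x := fun x hx => by
    have hg := (hgpos x hx).le
    refine abs_sub_le_of_nonneg_of_le (hUpos _).le ?_ (hUpos _).le ?_
    · calc U x = U (1 * x) := by rw [one_mul]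
        _ ≤ C₁ * g x := hC₁ x hx
        _ ≤ C * g x := by gcongr; exact le_max_left _ _
    · exact (hC₂ x hx).trans (by gcongr; exact le_max_right _ _)
  have hbound : ∀ lam : EuclideanSpace ℝ (Fin d),
      ‖(U ‖lam‖ - U (ε * ‖lam‖)) ^ 2 / f lam‖ ≤ C ^ 2 * g ‖lam‖ := fun lam => by
    have hg := hgpos _ (norm_nonneg lam)
    rw [Real.norm_eq_abs, abs_of_nonneg (div_nonneg (sq_nonneg _) (hg.trans_le (hfg lam)).le)]
    exact sq_div_le_of_abs_le hg (hfg lam) (hv _ (norm_nonneg lam))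
  refine integrable_of_le_const_of_le_integrableOn_norm_gt (M := C ^ 2 * g 0) 1 ?_
    ((hfint 1 one_pos).const_mul (C ^ 2))
    (fun lam => (hbound lam).trans ?_) (fun lam => (hbound lam).trans ?_)
  · exact (by fun_prop : Continuous fun lam : EuclideanSpace ℝ (Fin d) =>
      (U ‖lam‖ - U (ε * ‖lam‖)) ^ 2).measurable.div hfmeas |>.aestronglyMeasurable
  · exact mul_le_mul_of_nonneg_left (hgbdd _ (norm_nonneg lam)) (sq_nonneg C)
  · exact mul_le_mul_of_nonneg_left (hfg lam) (sq_nonneg C)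

/-- Step in Lemma 5: with U an even positive entire function of exponential type
dominated (after any scaling ε) by the minorant g of the spectral density f,
the function v(λ) = U(|λ|) − U(ε|λ|) satisfies ∫ v²/f < ∞, i.e. v/f ∈ L²(f dλ). -/
theorem stmt13 (d : ℕ) (g : ℝ → ℝ) (hgpos : ∀ x, 0 ≤ x → 0 < g x)
    (hgbdd : ∀ x, 0 ≤ x → g x ≤ g 0) (hgcont : Continuous g)
    (hgdec : AntitoneOn g (Set.Ici 0))
    (hgint : MeasureTheory.IntegrableOn
      (fun x => |Real.log (g x)| / (1 + x ^ 2)) (Set.Ici (0 : ℝ)))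
    (f : EuclideanSpace ℝ (Fin d) → ℝ) (hfmeas : Measurable f)
    (hfg : ∀ lam, g ‖lam‖ ≤ f lam)
    (hfint : ∀ δ : ℝ, 0 < δ → MeasureTheory.IntegrableOn f {lam | δ < ‖lam‖})
    (U : ℝ → ℝ) (hUpos : ∀ x, 0 < U x) (hUeven : ∀ x, U (-x) = U x)
    (hUentire : ∃ E : ℂ → ℂ, Differentiable ℂ E ∧ (∀ x : ℝ, E x = U x) ∧
      ∃ A B : ℝ, ∀ z, ‖E z‖ ≤ A * Real.exp (B * ‖z‖))
    (hUg : ∀ ε : ℝ, 0 < ε → ∃ C : ℝ, ∀ x, 0 ≤ x → U (ε * x) ≤ C * g x)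
    (ε : ℝ) (hε : 0 < ε) (hε1 : ε < 1) :
    MeasureTheory.Integrable (fun lam : EuclideanSpace ℝ (Fin d) =>
      (U ‖lam‖ - U (ε * ‖lam‖)) ^ 2 / f lam) :=
  stmt13_general d g hgpos hgbdd f hfmeas hfg hfint U hUpos hUentire hUg ε hε
end
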